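/- arXiv:0905.3651 — 9 statements merged into one kernel-verified Lean document; each statement's English description precedes it below -/
import Mathlib

section
/- Let G be a group acting linearly on a K-module V (a representation (V,G)), and suppose G is generated by a set M. If for every sequence (h_1,...,h_n) of elements of M we have x∘(h_1−1)(h_2−1)⋯(h_n−1)=0 for all x∈V (where the group-algebra action is used), then the representation satisfies the identity x∘(y_1−1)⋯(y_n−1)≡0 for all y_1,...,y_n ∈ G and all x ∈ V. -/
/-!
Write `U_S(k)` for the vectors killed by every product `(s₁ - 1) ⋯ (s_k - 1)` with all `sᵢ ∈ S`.
Peeling off the factor that acts first, `v ∈ U_S(k + 1)` iff `(s - 1) v ∈ U_S(k)` for all `s ∈ S`.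
For a subgroup `H`, `U_H(k)` is `H`-stable because `h⁻¹ (g - 1) h = h⁻¹ g h - 1`. Modulo an
`⟨M⟩`-stable submodule, the elements `g` with `(g - 1) v ≡ 0` form a subgroup, since
`g h - 1 = g (h - 1) + (g - 1)` and `g⁻¹ - 1 = -g⁻¹ (g - 1)`; induction on `k` then gives
`U_M(k) ⊆ U_⟨M⟩(k)`.
-/

namespace Representation

variable {K V G : Type*} [CommRing K] [AddCommGroup V] [Module K V] [Group G]
  (ρ : Representation K G V)

def unitriangularSubmodule (S : Set G) (k : ℕ) : Submodule K V :=
  ⨅ (l : List G) (_ : l.length = k) (_ : ∀ g ∈ l, g ∈ S),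
    LinearMap.ker (l.map fun g => (ρ g - 1 : Module.End K V)).prod

variable {ρ}

theorem mem_unitriangularSubmodule {S : Set G} {k : ℕ} {v : V} :
    v ∈ ρ.unitriangularSubmodule S k ↔ ∀ l : List G, l.length = k → (∀ g ∈ l, g ∈ S) →
      (l.map fun g => (ρ g - 1 : Module.End K V)).prod v = 0 := by
  simp [unitriangularSubmodule, Submodule.mem_iInf]

theorem unitriangularSubmodule_zero (S : Set G) : ρ.unitriangularSubmodule S 0 = ⊥ := by
  ext v
  simp [mem_unitriangularSubmodule]

theorem mem_unitriangularSubmodule_succ {S : Set G} {k : ℕ} {v : V} :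
    v ∈ ρ.unitriangularSubmodule S (k + 1) ↔
      ∀ g ∈ S, (ρ g - 1 : Module.End K V) v ∈ ρ.unitriangularSubmodule S k := by
  simp only [mem_unitriangularSubmodule]
  constructor
  · intro hv g hg l hl hlS
    simpa [List.prod_append] using
      hv (l ++ [g]) (by simp [hl]) (by simpa using fun x hx ↦ hx.elim (hlS x) (· ▸ hg))
  · intro hv l hl hlS
    obtain ⟨l, g, rfl⟩ := (List.eq_nil_or_concat' l).resolve_left (by rintro rfl; simp at hl)
    simpa [List.prod_append] using
      hv g (hlS g (by simp)) l (by simpa using hl) fun x hx ↦ hlS x (by simp [hx])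

theorem sub_one_apply_rho_apply (g h : G) (v : V) :
    (ρ g - 1 : Module.End K V) (ρ h v) = ρ h ((ρ (h⁻¹ * g * h) - 1 : Module.End K V) v) := by
  simp [← Module.End.mul_apply, ← map_mul, mul_assoc]

theorem rho_apply_mem_unitriangularSubmodule {H : Subgroup G} {h : G} (hh : h ∈ H) {k : ℕ}
    {v : V} (hv : v ∈ ρ.unitriangularSubmodule H k) :
    ρ h v ∈ ρ.unitriangularSubmodule H k := by
  induction k generalizing v with
  | zero => simp_all [unitriangularSubmodule_zero]
  | succ k ih =>
    rw [mem_unitriangularSubmodule_succ] at hv ⊢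
    intro g hg
    rw [sub_one_apply_rho_apply]
    exact ih (hv _ (H.mul_mem (H.mul_mem (H.inv_mem hh) hg) hh))

theorem sub_one_apply_mem_of_mem_closure {M : Set G} {W : Submodule K V}
    (hW : ∀ g ∈ Subgroup.closure M, ∀ w ∈ W, ρ g w ∈ W) {v : V}
    (hv : ∀ m ∈ M, (ρ m - 1 : Module.End K V) v ∈ W) {g : G} (hg : g ∈ Subgroup.closure M) :
    (ρ g - 1 : Module.End K V) v ∈ W := by
  induction hg using Subgroup.closure_induction with
  | mem m hm => exact hv m hm
  | one => simp
  | mul a b ha _ hav hbv =>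
    have hmul : (ρ (a * b) - 1 : Module.End K V) v =
        ρ a ((ρ b - 1 : Module.End K V) v) + (ρ a - 1 : Module.End K V) v := by
      simp [map_mul]
    rw [hmul]
    exact W.add_mem (hW a ha _ hbv) hav
  | inv a ha hav =>
    have hinv : (ρ a⁻¹ - 1 : Module.End K V) v = -ρ a⁻¹ ((ρ a - 1 : Module.End K V) v) := by
      simp [← Module.End.mul_apply, ← map_mul]
    rw [hinv]
    exact neg_mem (hW _ (inv_mem ha) _ hav)

theorem unitriangularSubmodule_le_closure (M : Set G) (k : ℕ) :
    ρ.unitriangularSubmodule M k ≤ ρ.unitriangularSubmodule (Subgroup.closure M) k := by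
  induction k with
  | zero => simp [unitriangularSubmodule_zero]
  | succ k ih =>
    intro v hv
    rw [mem_unitriangularSubmodule_succ] at hv ⊢
    intro g hg
    exact sub_one_apply_mem_of_mem_closure (fun _ hh _ ↦ rho_apply_mem_unitriangularSubmodule hh)
      (fun m hm ↦ ih (hv m hm)) hg

end Representation

theorem generators_unitriangular_implies_identity
    {K V G : Type*} [Field K] [AddCommGroup V] [Module K V] [Group G]
    (ρ : Representation K G V) (M : Set G) (hM : Subgroup.closure M = ⊤) (n : ℕ)
    (h : ∀ l : List G, l.length = n → (∀ g ∈ l, g ∈ M) →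
      ∀ v : V, ((l.map (fun g => (ρ g - 1 : Module.End K V))).prod) v = 0) :
    ∀ l : List G, l.length = n →
      ∀ v : V, ((l.map (fun g => (ρ g - 1 : Module.End K V))).prod) v = 0 := by
  intro l hl v
  have hv : v ∈ ρ.unitriangularSubmodule (Subgroup.closure M) n :=
    Representation.unitriangularSubmodule_le_closure M n
      (Representation.mem_unitriangularSubmodule.2 fun l hl hlM ↦ h l hl hlM v)
  rw [hM] at hv
  exact Representation.mem_unitriangularSubmodule.1 hv l hl fun _ _ ↦ Subgroup.mem_top _
end

section
/- Let (V,G) be a faithful representation satisfying the identity x∘(g_1−1)⋯(g_n−1)≡0 for all g_i in G (that is, (V,G) is faithfully n-unitriangular). Then G is a nilpotent group of nilpotency class at most n−1. -/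
/-!
Let `W i = V · I^i`, where `I` is the augmentation ideal of `K[G]`; this is a `G`-stable
filtration of `V`, and `n`-unitriangularity says `W n = 0`. For any `G`-stable filtration the
elements acting trivially on all quotients `W i / W (i + d)` form a subgroup `G_d`, and the
identity `[p, q] - 1 = ((p - 1)(q - 1) - (q - 1)(p - 1)) p⁻¹ q⁻¹` gives `⁅G_a, G_b⁆ ≤ G_(a+b)`.
Since `G = G_1`, the `k`-th term of the lower central series lies in `G_(k+1)`, so `γ_(n-1)`
acts trivially on `V = W 0 / W n` and is trivial by faithfulness.
-/

open scoped commutatorElement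

namespace Representation

variable {k G V : Type*} [CommRing k] [Group G] [AddCommGroup V] [Module k V]
  (ρ : Representation k G V)

section StabilitySubgroup

variable (W : ℕ → Submodule k V) (hW : ∀ g i, ∀ v ∈ W i, ρ g v ∈ W i)

def stabilitySubgroup (d : ℕ) : Subgroup G where
  carrier := {g | ∀ i, ∀ v ∈ W i, ρ g v - v ∈ W (i + d)}
  one_mem' i v _ := by simp
  mul_mem' {x y} hx hy i v hv := by
    have hxy : ρ (x * y) v - v = ρ x (ρ y v - v) + (ρ x v - v) := by
      simp only [map_mul, Module.End.mul_apply, map_sub]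
      abel
    rw [hxy]
    exact add_mem (hW x _ _ (hy i v hv)) (hx i v hv)
  inv_mem' {x} hx i v hv := by
    have hinv : ρ x⁻¹ v - v = -(ρ x (ρ x⁻¹ v) - ρ x⁻¹ v) := by simp
    rw [hinv]
    exact neg_mem (hx i _ (hW _ i v hv))

variable {ρ W hW}

lemma commutator_stabilitySubgroup_le (a b : ℕ) :
    ⁅stabilitySubgroup ρ W hW a, stabilitySubgroup ρ W hW b⁆ ≤
      stabilitySubgroup ρ W hW (a + b) := by
  rw [Subgroup.commutator_le]
  intro p hp q hq i v hv
  set w := ρ p⁻¹ (ρ q⁻¹ v)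
  have hw : w ∈ W i := hW _ _ _ (hW _ _ _ hv)
  have hcomm : ρ (⁅p, q⁆ : G) v - v
      = (ρ p (ρ q w - w) - (ρ q w - w)) - (ρ q (ρ p w - w) - (ρ p w - w)) := by
    have hpq : ρ (⁅p, q⁆ : G) v = ρ p (ρ q w) := by simp [w, commutatorElement_def]
    have hqp : v = ρ q (ρ p w) := by simp [w]
    rw [hpq, hqp, map_sub, map_sub]
    abel
  rw [hcomm]
  refine sub_mem ?_ ?_
  · simpa [add_assoc, add_comm b] using hp _ _ (hq i w hw)
  · simpa [add_assoc] using hq _ _ (hp i w hw)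

lemma lowerCentralSeries_le_stabilitySubgroup {S : Subgroup G}
    (hS : S ≤ stabilitySubgroup ρ W hW 1) :
    ∀ n, S.lowerCentralSeries n ≤ stabilitySubgroup ρ W hW (n + 1)
  | 0 => hS
  | n + 1 => (Subgroup.commutator_mono (lowerCentralSeries_le_stabilitySubgroup hS n) hS).trans
      (commutator_stabilitySubgroup_le _ _)

end StabilitySubgroup

/-- `V · I^i` for the augmentation ideal `I` of `k[G]`, without forming the group algebra. -/
def augmentationFiltration : ℕ → Submodule k V
  | 0 => ⊤
  | i + 1 => ⨆ g, (augmentationFiltration i).map (ρ g - 1)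

variable {ρ}

lemma sub_one_apply_mem_augmentationFiltration_succ (g : G) {i : ℕ} {v : V}
    (hv : v ∈ augmentationFiltration ρ i) :
    (ρ g - 1) v ∈ augmentationFiltration ρ (i + 1) :=
  Submodule.mem_iSup_of_mem g (Submodule.mem_map_of_mem hv)

lemma augmentationFiltration_antitone : Antitone (augmentationFiltration ρ) := by
  refine antitone_nat_of_succ_le fun i => ?_
  induction i with
  | zero => exact le_top
  | succ i ih => exact iSup_mono fun g => Submodule.map_mono ih

lemma apply_mem_augmentationFiltration (g : G) {i : ℕ} {v : V}
    (hv : v ∈ augmentationFiltration ρ i) : ρ g v ∈ augmentationFiltration ρ i := by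
  have hsplit : ρ g v = v + (ρ g - 1) v := by simp
  rw [hsplit]
  exact add_mem hv (augmentationFiltration_antitone i.le_succ
    (sub_one_apply_mem_augmentationFiltration_succ g hv))

lemma augmentationFiltration_le_span (i : ℕ) :
    augmentationFiltration ρ i ≤ Submodule.span k
      {x | ∃ l : List G, l.length = i ∧ ∃ v, (l.map (fun g => ρ g - 1)).prod v = x} := by
  induction i with
  | zero => exact fun v _ => Submodule.subset_span ⟨[], rfl, v, rfl⟩
  | succ i ih =>
    refine iSup_le fun g => (Submodule.map_mono ih).trans ?_
    rw [Submodule.map_span]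
    refine Submodule.span_mono ?_
    rintro _ ⟨_, ⟨l, hl, v, rfl⟩, rfl⟩
    exact ⟨g :: l, by simp [hl], v, rfl⟩

lemma top_le_stabilitySubgroup_one :
    ⊤ ≤ stabilitySubgroup ρ (augmentationFiltration ρ)
      (fun g _ _ => apply_mem_augmentationFiltration g) 1 :=
  fun g _ _ _ hv => sub_one_apply_mem_augmentationFiltration_succ g hv

lemma augmentationFiltration_eq_bot {n : ℕ}
    (h : ∀ l : List G, l.length = n → ∀ v, (l.map (fun g => ρ g - 1)).prod v = 0) :
    augmentationFiltration ρ n = ⊥ := by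
  refine eq_bot_iff.2 ((augmentationFiltration_le_span n).trans ?_)
  rw [Submodule.span_le]
  rintro _ ⟨l, hl, v, rfl⟩
  exact h l hl v

end Representation

open Representation in
/-- Kaloujnine's theorem: a faithful `n`-unitriangular representation forces the
group to be nilpotent of class at most `n - 1`. -/
theorem kaloujnine {K V G : Type*} [Field K] [AddCommGroup V] [Module K V] [Group G]
    (ρ : Representation K G V) (hfaithful : Function.Injective ρ) (n : ℕ)
    (h : ∀ l : List G, l.length = n →
      ∀ v : V, ((l.map (fun g => (ρ g - 1 : Module.End K V))).prod) v = 0) :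
    (⊤ : Subgroup G).lowerCentralSeries (n - 1) = ⊥ := by
  have hle : augmentationFiltration ρ (0 + (n - 1 + 1)) ≤ ⊥ :=
    augmentationFiltration_eq_bot h ▸ augmentationFiltration_antitone (by omega)
  refine eq_bot_iff.2 fun g hg => hfaithful ?_
  ext v : 1
  have hfix := hle <| lowerCentralSeries_le_stabilitySubgroup top_le_stabilitySubgroup_one (n - 1)
    hg 0 v Submodule.mem_top
  simpa [sub_eq_zero] using hfix
end

section
/- Let K be a field and G ≤ GL_n(K) a linear group such that every g ∈ G is unipotent (i.e., (g−1)^n = 0 as a matrix). Then there is a basis of K^n in which all elements of G are simultaneously upper unitriangular; equivalently, the representation (K^n, G) satisfies the identity x∘(y_1−1)⋯(y_n−1)≡0. -/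
/-!
Extend scalars to an algebraic closure. There a unipotent representation has a nonzero fixed
vector: on an irreducible subrepresentation `W`, Burnside's theorem (Schur's lemma plus Jacobson
density) says that the group spans `End W`, while `tr ((g - 1) h) = tr (g h) - tr h = 0` for all
`g, h` because every unipotent map has trace `tr 1`; nondegeneracy of the trace form forces
`g = 1` on `W`. Dividing out the fixed vectors and inducting on the dimension, every product of
`dim V` factors `g - 1` vanishes.
-/

open Module

/-- **Burnside's theorem**. -/
theorem IsSimpleModule.lsmul_surjective_of_isAlgClosed {k A V : Type*} [Field k] [IsAlgClosed k]
    [Ring A] [Algebra k A] [AddCommGroup V] [Module k V] [Module A V] [IsScalarTower k A V]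
    [IsSimpleModule A V] [FiniteDimensional k V] :
    Function.Surjective (Algebra.lsmul k k V : A →ₐ[k] Module.End k V) := by
  intro f
  have hschur := IsSimpleModule.algebraMap_end_bijective_of_isAlgClosed (A := A) (V := V) k
  let f' : Module.End (Module.End A V) V :=
    { toFun := f
      map_add' := f.map_add
      map_smul' := fun φ v => by
        obtain ⟨c, rfl⟩ := hschur.2 φ
        exact f.map_smul c v }
  have : Module.Finite (Module.End A V) V := .of_restrictScalars_finite k _ V
  obtain ⟨r, hr⟩ := Module.Finite.toModuleEnd_moduleEnd_surjective f'
  exact ⟨r, LinearMap.ext fun v => congr($hr v)⟩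

namespace LinearMap

theorem eq_zero_of_forall_trace_mul_eq_zero {R M : Type*} [CommRing R] [AddCommGroup M]
    [Module R M] [Module.Free R M] [Module.Finite R M] {x : Module.End R M}
    (h : ∀ f : Module.End R M, trace R M (x * f) = 0) : x = 0 := by
  ext v
  rw [zero_apply, ← Module.forall_dual_apply_eq_zero_iff R]
  intro φ
  have hrank_one : x * φ.smulRight v = φ.smulRight (x v) := by ext; simp
  simpa [hrank_one, trace_smulRight] using h (φ.smulRight v)

theorem trace_eq_trace_one_of_isNilpotent_sub_one {R M : Type*} [CommRing R] [IsReduced R]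
    [AddCommGroup M] [Module R M] {u : Module.End R M} (hu : IsNilpotent (u - 1)) :
    trace R M u = trace R M 1 := by
  rw [← sub_eq_zero, ← map_sub]
  exact (isNilpotent_trace_of_isNilpotent hu).eq_zero

end LinearMap

namespace Representation

section Monoid

variable {k G V : Type*} [CommRing k] [Monoid G] [AddCommGroup V] [Module k V]

def IsUnipotent (ρ : Representation k G V) : Prop := ∀ g, IsNilpotent (ρ g - 1)

theorem IsUnipotent.subrepresentation {ρ : Representation k G V} (hρ : ρ.IsUnipotent)
    (W : Subrepresentation ρ) : W.toRepresentation.IsUnipotent := by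
  intro g
  have hW : Set.MapsTo (ρ g - 1 : Module.End k V) W.toSubmodule W.toSubmodule := fun v hv =>
    W.toSubmodule.sub_mem (W.apply_mem_toSubmodule g hv) hv
  convert Module.End.isNilpotent.restrict hW (hρ g)
  ext; rfl

theorem IsUnipotent.quotient {ρ : Representation k G V} (hρ : ρ.IsUnipotent) (W : Submodule k V)
    (hW : ∀ g, W ≤ W.comap (ρ g)) : (ρ.quotient W hW).IsUnipotent := by
  intro g
  convert Module.End.IsNilpotent.mapQ (p := W)
    (fun v hv => show (ρ g - 1) v ∈ W from W.sub_mem (hW g hv) hv) (hρ g)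
  ext; rfl

theorem quotient_list_prod_map_sub_one_mkQ {ρ : Representation k G V} (W : Submodule k V)
    (hW : ∀ g, W ≤ W.comap (ρ g)) (l : List G) (v : V) :
    (l.map fun g => ρ.quotient W hW g - 1).prod (W.mkQ v) =
      W.mkQ ((l.map fun g => ρ g - 1).prod v) := by
  induction l with
  | nil => rfl
  | cons g l ih =>
    simp only [List.map_cons, List.prod_cons, Module.End.mul_apply, ih]
    simp

end Monoid

section Field

variable {k G V : Type*} [Field k] [AddCommGroup V] [Module k V]

theorem exists_ne_bot_ne_top_of_not_isIrreducible [Monoid G] [Nontrivial V]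
    {ρ : Representation k G V} (h : ¬ρ.IsIrreducible) :
    ∃ W : Subrepresentation ρ, W ≠ ⊥ ∧ W ≠ ⊤ := by
  by_contra! hW
  refine h ((isSimpleOrder_iff _).2 ⟨⟨⊥, ⊤, fun hbot => ?_⟩, fun W => or_iff_not_imp_left.2 (hW W)⟩)
  exact bot_ne_top (congrArg Subrepresentation.toSubmodule hbot)

theorem IsUnipotent.eq_one_of_isIrreducible [Monoid G] [IsAlgClosed k] [FiniteDimensional k V]
    {ρ : Representation k G V} (hρ : ρ.IsUnipotent) [ρ.IsIrreducible] (g : G) : ρ g = 1 := by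
  have htrace : ∀ r, LinearMap.trace k V ((ρ g - 1) * ρ.asAlgebraHom r) = 0 := by
    intro r
    induction r using MonoidAlgebra.induction_on with
    | of h =>
      rw [asAlgebraHom_of, sub_mul, one_mul, ← map_mul, map_sub,
        LinearMap.trace_eq_trace_one_of_isNilpotent_sub_one (hρ _),
        LinearMap.trace_eq_trace_one_of_isNilpotent_sub_one (hρ _), sub_self]
    | add r s hr hs => rw [map_add, mul_add, map_add, hr, hs, add_zero]
    | smul c r hr => rw [map_smul, mul_smul_comm, map_smul, hr, smul_zero]
  have hspan : Function.Surjective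
      (Algebra.lsmul k k ρ.asModule : MonoidAlgebra k G →ₐ[k] _) :=
    IsSimpleModule.lsmul_surjective_of_isAlgClosed
  rw [← sub_eq_zero]
  refine LinearMap.eq_zero_of_forall_trace_mul_eq_zero fun f => ?_
  obtain ⟨r, rfl⟩ := hspan f
  exact htrace r

variable [Group G] [IsAlgClosed k] [FiniteDimensional k V]

theorem IsUnipotent.invariants_ne_bot [Nontrivial V] {ρ : Representation k G V}
    (hρ : ρ.IsUnipotent) : ρ.invariants ≠ ⊥ := by
  induction hd : finrank k V using Nat.strong_induction_on generalizing V with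
  | _ d ih =>
    by_cases hirr : ρ.IsIrreducible
    · have htop : ρ.invariants = ⊤ :=
        eq_top_iff.2 fun v _ g => by simp [hρ.eq_one_of_isIrreducible g]
      exact htop ▸ top_ne_bot
    obtain ⟨W, hW_bot, hW_top⟩ := exists_ne_bot_ne_top_of_not_isIrreducible hirr
    have : Nontrivial W.toSubmodule :=
      Submodule.nontrivial_iff_ne_bot.2 fun h => hW_bot (Subrepresentation.ext h)
    have hlt : finrank k W.toSubmodule < d :=
      hd ▸ Submodule.finrank_lt fun h => hW_top (Subrepresentation.ext h)
    obtain ⟨w, hw, hw0⟩ := (Submodule.ne_bot_iff _).1 (ih _ hlt (hρ.subrepresentation W) rfl)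
    exact (Submodule.ne_bot_iff _).2 ⟨w, fun g => congrArg Subtype.val (hw g), by simpa using hw0⟩

theorem IsUnipotent.list_prod_map_sub_one_eq_zero {ρ : Representation k G V}
    (hρ : ρ.IsUnipotent) (l : List G) (hl : finrank k V ≤ l.length) :
    (l.map fun g => ρ g - 1).prod = 0 := by
  induction l generalizing V with
  | nil =>
    have : Subsingleton V := Module.finrank_zero_iff.1 (Nat.le_zero.1 hl)
    exact Subsingleton.elim _ _
  | cons a l ih =>
    rcases subsingleton_or_nontrivial V with hV | hV
    · exact Subsingleton.elim _ _
    set F := ρ.invariants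
    have hF : ∀ g, F ≤ F.comap (ρ g) := fun g v hv h => by simp [hv g, hv h]
    have hF_pos : 0 < finrank k F :=
      Nat.pos_of_ne_zero (mt Submodule.finrank_eq_zero.1 hρ.invariants_ne_bot)
    have hquot := Submodule.finrank_quotient_add_finrank F
    have hl' : finrank k (V ⧸ F) ≤ l.length := by simp only [List.length_cons] at hl; omega
    have hmem : ∀ v, (l.map fun g => ρ g - 1).prod v ∈ F := fun v => by
      rw [← Submodule.Quotient.mk_eq_zero, ← Submodule.mkQ_apply,
        ← quotient_list_prod_map_sub_one_mkQ F hF, ih (hρ.quotient F hF) hl']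
      rfl
    ext v
    simp [hmem v a]

end Field

end Representation

theorem Matrix.list_prod_map_sub_one_eq_zero {K G ι : Type*} [Field K] [Group G] [Fintype ι]
    [DecidableEq ι] (φ : G →* Matrix ι ι K) (hφ : ∀ g, IsNilpotent (φ g - 1)) (l : List G)
    (hl : Fintype.card ι ≤ l.length) : (l.map fun g => φ g - 1).prod = 0 := by
  let L := AlgebraicClosure K
  let ψ : Matrix ι ι K →+* Matrix ι ι L := (algebraMap K L).mapMatrix
  let ρ : Representation L G (ι → L) :=
    Matrix.toLinAlgEquiv'.toMonoidHom.comp ((ψ : Matrix ι ι K →* Matrix ι ι L).comp φ)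
  have hρ_sub_one (g : G) : ρ g - 1 = Matrix.toLinAlgEquiv' (ψ (φ g - 1)) := by simp [ρ]
  have hρ : ρ.IsUnipotent := fun g => hρ_sub_one g ▸ ((hφ g).map ψ).map _
  have hψ : Function.Injective ψ := Matrix.map_injective (algebraMap K L).injective
  apply Matrix.toLinAlgEquiv'.injective.comp hψ
  simp only [Function.comp_apply, map_list_prod, List.map_map, map_zero]
  have h := hρ.list_prod_map_sub_one_eq_zero l (by simpa using hl)
  simp only [hρ_sub_one] at h
  exact h

/-- Kolchin's theorem: a group of unipotent matrices is simultaneously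
unitriangularizable; equivalently, it satisfies the identity
`x ∘ (y₁ - 1) ⋯ (yₙ - 1) ≡ 0`. -/
theorem kolchin {K : Type*} [Field K] (n : ℕ)
    (G : Subgroup (GL (Fin n) K))
    (hunip : ∀ g ∈ G, ((g : Matrix (Fin n) (Fin n) K) - 1) ^ n = 0) :
    ∀ l : List (GL (Fin n) K), l.length = n → (∀ g ∈ l, g ∈ G) →
      ∀ v : Fin n → K,
        Matrix.vecMul v ((l.map (fun g => (g : Matrix (Fin n) (Fin n) K) - 1)).prod) = 0 := by
  intro l hlen hlG v
  obtain ⟨l, rfl⟩ : ∃ l' : List G, l'.map Subtype.val = l := CanLift.prf l hlG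
  have hprod := Matrix.list_prod_map_sub_one_eq_zero ((Units.coeHom _).comp G.subtype)
    (fun g => ⟨n, hunip g g.2⟩) l (by simpa using hlen.ge)
  -- the coercion `GL → Matrix` in the statement is lifted through the list monad
  simp only [bind_pure_comp, List.map_eq_map, List.map_map]
  simpa using congrArg (Matrix.vecMul v) hprod
end

section
/- Let G = ⟨g_1,...,g_k⟩ be a finitely generated abelian group acting on a K-module V, and suppose the representation is unipotent with v∘(g_i−1)^{n_i} = 0 for all v ∈ V and i = 1, ..., k. Then v∘(h_1−1)⋯(h_N−1) = 0 for all v ∈ V and all h_1, ..., h_N ∈ G, where N = n_1 + ⋯ + n_k − k + 1. -/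
theorem abelian_unipotent_is_unitriangular
    {K V G : Type*} [Field K] [AddCommGroup V] [Module K V] [CommGroup G]
    (ρ : Representation K G V) (k : ℕ) (g : Fin k → G)
    (hgen : Subgroup.closure (Set.range g) = ⊤) (n : Fin k → ℕ)
    (hunip : ∀ i : Fin k, ∀ v : V, (((ρ (g i) - 1 : Module.End K V)) ^ (n i)) v = 0) :
    ∀ l : List G, l.length = (∑ i, n i) - k + 1 →
      ∀ v : V, ((l.map (fun h => (ρ h - 1 : Module.End K V))).prod) v = 0 := by
  classical
  intro l hl v
  set a : Fin k → MonoidAlgebra K G := fun i => MonoidAlgebra.of K G (g i) - 1 with ha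
  set A : Ideal (MonoidAlgebra K G) := RingHom.ker ρ.asAlgebraHom with hA
  set J : Ideal (MonoidAlgebra K G) := Ideal.span (Set.range a) with hJdef
  have haA : ∀ i, a i ^ n i ∈ A := by
    intro i
    have h1 : ρ.asAlgebraHom (a i ^ n i) = (ρ (g i) - 1 : Module.End K V) ^ n i := by
      rw [map_pow, map_sub, map_one, Representation.asAlgebraHom_of]
    have h2 : ((ρ (g i) - 1 : Module.End K V) ^ n i) = 0 := by
      ext w; exact hunip i w
    rw [hA, RingHom.mem_ker, h1, h2]
  have hJ : ∀ h : G, (MonoidAlgebra.of K G h - 1) ∈ J := by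
    intro h
    have hmem : h ∈ Subgroup.closure (Set.range g) := hgen ▸ Subgroup.mem_top h
    induction hmem using Subgroup.closure_induction with
    | mem x hx => obtain ⟨i, rfl⟩ := hx; exact Ideal.subset_span ⟨i, rfl⟩
    | one =>
        rw [map_one, sub_self]
        exact J.zero_mem
    | mul x y hx hy ihx ihy =>
        have hxy : MonoidAlgebra.of K G (x * y) - 1
            = (MonoidAlgebra.of K G x - 1) * MonoidAlgebra.of K G y
              + (MonoidAlgebra.of K G y - 1) := by
          rw [map_mul]; ring
        rw [hxy]
        exact J.add_mem (Ideal.mul_mem_right _ _ ihx) ihy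
    | inv x hx ihx =>
        have h1 : (MonoidAlgebra.of K G x) * (MonoidAlgebra.of K G x⁻¹) = 1 := by
          rw [← map_mul, mul_inv_cancel, map_one]
        have hxi : MonoidAlgebra.of K G x⁻¹ - 1
            = -((MonoidAlgebra.of K G x - 1) * MonoidAlgebra.of K G x⁻¹) := by
          linear_combination h1
        rw [hxi]
        exact J.neg_mem (Ideal.mul_mem_right _ _ ihx)
  have key : J ^ l.length ≤ A := by
    by_cases hz : ∃ i, n i = 0
    · obtain ⟨i, hi⟩ := hz
      have h1 : (1 : MonoidAlgebra K G) ∈ A := by simpa [hi] using haA i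
      have hAT : A = ⊤ := (Ideal.eq_top_iff_one A).2 h1
      rw [hAT]; exact le_top
    push_neg at hz
    rw [hJdef, Ideal.span, Submodule.span_pow]
    rw [Submodule.span_le]
    intro x hx
    rw [Set.mem_pow] at hx
    obtain ⟨f, hf⟩ := hx
    choose idx hidx using fun j => (f j).2
    have hx' : x = ∏ j : Fin l.length, a (idx j) := by
      rw [← hf, List.prod_ofFn]
      exact Finset.prod_congr rfl fun j _ => (hidx j).symm
    -- pigeonhole: some index occurs at least n i times
    have hsum : (Finset.univ : Finset (Fin l.length)).card
        = ∑ i : Fin k, ((Finset.univ : Finset (Fin l.length)).filter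
            (fun j => idx j = i)).card :=
      Finset.card_eq_sum_card_fiberwise (fun x _ => Finset.mem_univ (idx x))
    have hpig : ∃ i : Fin k, n i ≤
        ((Finset.univ : Finset (Fin l.length)).filter (fun j => idx j = i)).card := by
      by_contra hcon
      push_neg at hcon
      have h1 : ∀ i : Fin k, ((Finset.univ : Finset (Fin l.length)).filter
          (fun j => idx j = i)).card + 1 ≤ n i := fun i => hcon i
      have h2 : (∑ i : Fin k, (((Finset.univ : Finset (Fin l.length)).filter
          (fun j => idx j = i)).card + 1)) ≤ ∑ i, n i :=
        Finset.sum_le_sum fun i _ => h1 i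
      rw [Finset.sum_add_distrib, Finset.sum_const, Finset.card_univ,
        Fintype.card_fin, smul_eq_mul, mul_one] at h2
      have hk : k ≤ ∑ i, n i := by
        calc k = ∑ _i : Fin k, 1 := by simp
        _ ≤ ∑ i, n i := Finset.sum_le_sum fun i _ => Nat.one_le_iff_ne_zero.2 (hz i)
      have hcard : (Finset.univ : Finset (Fin l.length)).card = l.length := by simp
      omega
    obtain ⟨i, hi⟩ := hpig
    have hdvd : a i ^ n i ∣ x := by
      refine dvd_trans (pow_dvd_pow (a i) hi) ?_
      have heq : a i ^ ((Finset.univ : Finset (Fin l.length)).filter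
          (fun j => idx j = i)).card
          = ∏ j ∈ (Finset.univ : Finset (Fin l.length)).filter (fun j => idx j = i),
              a (idx j) := by
        rw [Finset.prod_congr rfl (fun j hj => by
          rw [(Finset.mem_filter.1 hj).2]), Finset.prod_const]
      rw [heq, hx']
      exact Finset.prod_dvd_prod_of_subset _ _ _ (Finset.filter_subset _ _)
    exact Ideal.mem_of_dvd _ hdvd (haA i)
  have hmem : ∀ l' : List G,
      (l'.map (fun h => MonoidAlgebra.of K G h - 1)).prod ∈ J ^ l'.length := by
    intro l'
    induction l' with
    | nil =>
        simp only [List.map_nil, List.prod_nil, List.length_nil, pow_zero, Ideal.one_eq_top]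
        exact Submodule.mem_top
    | cons h t ih =>
        rw [List.map_cons, List.prod_cons, List.length_cons, pow_succ']
        exact Ideal.mul_mem_mul (hJ h) ih
  have hzero : ρ.asAlgebraHom ((l.map (fun h => MonoidAlgebra.of K G h - 1)).prod) = 0 := by
    have := key (hmem l)
    rwa [hA, RingHom.mem_ker] at this
  have hfin : ρ.asAlgebraHom ((l.map (fun h => MonoidAlgebra.of K G h - 1)).prod)
      = (l.map (fun h => (ρ h - 1 : Module.End K V))).prod := by
    rw [map_list_prod, List.map_map]
    have hfun : (⇑ρ.asAlgebraHom ∘ fun h => MonoidAlgebra.of K G h - 1)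
        = fun h => (ρ h - 1 : Module.End K V) := by
      funext h
      simp [Function.comp, map_sub, Representation.asAlgebraHom_of]
    rw [hfun]
  rw [← hfin, hzero]
  rfl
end

section
/- Every finitely generated solvable group in which every subgroup is finitely generated (i.e., a Noetherian solvable group) is polycyclic. -/
/-- A group is polycyclic if it has a subnormal series with cyclic factors. -/
def IsPolycyclic (G : Type*) [Group G] : Prop :=
  ∃ (n : ℕ) (f : Fin (n + 1) → Subgroup G),
    f 0 = ⊥ ∧ f (Fin.last n) = ⊤ ∧
    ∀ i : Fin n, f i.castSucc ≤ f i.succ ∧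
      ∃ _ : ((f i.castSucc).subgroupOf (f i.succ)).Normal,
        IsCyclic ((f i.succ) ⧸ (f i.castSucc).subgroupOf (f i.succ))

/-!
Build a polycyclic series through the derived series `G = G⁽⁰⁾ ≥ G⁽¹⁾ ≥ ⋯ ≥ G⁽ⁿ⁾ = 1`.
Each term `G⁽ᵏ⁾` is finitely generated, say by `g₁, …, gₘ`, and its commutator subgroup is
`G⁽ᵏ⁺¹⁾`, so every subgroup between them is normal in `G⁽ᵏ⁾`. Adjoining the generators to
`G⁽ᵏ⁺¹⁾` one at a time therefore refines `G⁽ᵏ⁺¹⁾ ≤ G⁽ᵏ⁾` into steps with cyclic quotients.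
-/

open Subgroup Relation

theorem Relation.ReflTransGen.exists_fin_chain {α : Type*} {r : α → α → Prop} {a b : α}
    (h : ReflTransGen r a b) :
    ∃ (n : ℕ) (f : Fin (n + 1) → α), f 0 = a ∧ f (Fin.last n) = b ∧
      ∀ i : Fin n, r (f i.castSucc) (f i.succ) := by
  induction h with
  | refl => exact ⟨0, fun _ => a, rfl, rfl, Fin.elim0⟩
  | @tail b c _ hbc ih =>
    obtain ⟨n, f, hf0, hfn, hf⟩ := ih
    refine ⟨n + 1, Fin.snoc f c, ?_, Fin.snoc_last _ _, fun i => ?_⟩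
    · rw [← Fin.castSucc_zero, Fin.snoc_castSucc, hf0]
    · induction i using Fin.lastCases with
      | last => simpa [hfn] using hbc
      | cast j => rw [Fin.succ_castSucc, Fin.snoc_castSucc, Fin.snoc_castSucc]; exact hf j

theorem QuotientGroup.isCyclic_of_sup_zpowers_eq_top {G : Type*} [Group G] {N : Subgroup G}
    [N.Normal] {g : G} (h : N ⊔ zpowers g = ⊤) : IsCyclic (G ⧸ N) := by
  refine isCyclic_iff_exists_zpowers_eq_top.mpr ⟨QuotientGroup.mk' N g, ?_⟩
  rw [← MonoidHom.map_zpowers, ← bot_sup_eq (Subgroup.map _ _), ← QuotientGroup.map_mk'_self N,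
    ← Subgroup.map_sup, h, map_top_of_surjective _ (QuotientGroup.mk'_surjective N)]

namespace Subgroup

variable {G : Type*} [Group G]

-- Verbatim the step condition of `IsPolycyclic`.
def PolycyclicStep (A B : Subgroup G) : Prop :=
  A ≤ B ∧ ∃ _ : (A.subgroupOf B).Normal, IsCyclic (B ⧸ A.subgroupOf B)

theorem subgroupOf_sup_zpowers_eq_top (L : Subgroup G) (g : G) :
    L.subgroupOf (L ⊔ zpowers g) ⊔ zpowers ⟨g, mem_sup_right (mem_zpowers g)⟩ = ⊤ := by
  apply map_injective (L ⊔ zpowers g).subtype_injective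
  rw [map_sup, subgroupOf_map_subtype, MonoidHom.map_zpowers, ← MonoidHom.range_eq_map,
    range_subtype, inf_of_le_left le_sup_left]
  rfl

theorem polycyclicStep_sup_zpowers {L : Subgroup G} {g : G}
    (h : ⁅L ⊔ zpowers g, L ⊔ zpowers g⁆ ≤ L) : PolycyclicStep L (L ⊔ zpowers g) := by
  have hnormal : (L.subgroupOf (L ⊔ zpowers g)).Normal := by
    refine Normal.of_commutator_le _ fun x hx => ?_
    rw [mem_subgroupOf]
    exact h ((L ⊔ zpowers g).map_subtype_commutator ▸ mem_map_of_mem _ hx)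
  exact ⟨le_sup_left, hnormal,
    QuotientGroup.isCyclic_of_sup_zpowers_eq_top (subgroupOf_sup_zpowers_eq_top L g)⟩

theorem reflTransGen_polycyclicStep_of_commutator_le {K H : Subgroup G} (hKH : K ≤ H)
    (hcomm : ⁅H, H⁆ ≤ K) (hH : H.FG) : ReflTransGen PolycyclicStep K H := by
  classical
  suffices h : ∀ T : Finset G, ↑T ⊆ (H : Set G) → ReflTransGen PolycyclicStep K (K ⊔ closure T) by
    obtain ⟨S, rfl⟩ := hH
    simpa [sup_of_le_right hKH] using h S subset_closure
  intro T
  induction T using Finset.induction_on with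
  | empty => simpa using ReflTransGen.refl
  | insert g T _ ih =>
    intro hgT
    rw [Finset.coe_insert, Set.insert_subset_iff] at hgT
    have hsup : K ⊔ closure ↑(insert g T) = (K ⊔ closure T) ⊔ zpowers g := by
      rw [Finset.coe_insert, Set.insert_eq, closure_union, ← zpowers_eq_closure,
        sup_comm (zpowers g), sup_assoc]
    have hle : (K ⊔ closure T) ⊔ zpowers g ≤ H :=
      sup_le (sup_le hKH (closure_le H |>.mpr hgT.2)) (zpowers_le.mpr hgT.1)
    rw [hsup]
    exact (ih hgT.2).tail (polycyclicStep_sup_zpowers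
      ((commutator_mono hle hle).trans (hcomm.trans le_sup_left)))

end Subgroup

theorem IsPolycyclic.of_reflTransGen {G : Type*} [Group G]
    (h : ReflTransGen PolycyclicStep (⊥ : Subgroup G) ⊤) : IsPolycyclic G :=
  h.exists_fin_chain

theorem reflTransGen_polycyclicStep_derivedSeries {G : Type*} [Group G]
    (hfg : ∀ k, (derivedSeries G k).FG) (n : ℕ) :
    ReflTransGen PolycyclicStep (derivedSeries G n) ⊤ := by
  induction n with
  | zero => exact ReflTransGen.refl
  | succ n ih =>
    have hstep := (derivedSeries_succ G n).symm
    exact (reflTransGen_polycyclicStep_of_commutator_le (hstep ▸ commutator_le_self _)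
      hstep.le (hfg n)).trans ih

theorem noetherian_solvable_is_polycyclic_general
    {G : Type*} [Group G] (hsolv : IsSolvable G)
    (hnoeth : ∀ H : Subgroup G, H.FG) :
    IsPolycyclic G := by
  obtain ⟨n, hn⟩ := hsolv.solvable
  exact IsPolycyclic.of_reflTransGen
    (hn ▸ reflTransGen_polycyclicStep_derivedSeries (fun k => hnoeth _) n)

theorem noetherian_solvable_is_polycyclic
    {G : Type*} [Group G] (hfg : Group.FG G) (hsolv : IsSolvable G)
    (hnoeth : ∀ H : Subgroup G, H.FG) :
    IsPolycyclic G :=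
  noetherian_solvable_is_polycyclic_general hsolv hnoeth
end

section
/- A nonabelian free group is not an algebraic group in the following sense: there exist elements g, x of the free group F on two generators such that the subgroup generated by all iterated commutators [x, g], [[x,g],g], [[[x,g],g],g], ... is not finitely generated. -/
open scoped commutatorElement

/-- Iterated commutators: `itComm x g 0 = ⁅x, g⁆`, `itComm x g (n+1) = ⁅itComm x g n, g⁆`. -/
def itComm {G : Type*} [Group G] (x g : G) : ℕ → G :=
  fun n => (fun c => ⁅c, g⁆)^[n] ⁅x, g⁆

/-!
Send `g` to the homothety `y ↦ (1 - X) * y` and `x` to the translation `y ↦ y + 1` of the power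
series ring `ℤ⟦X⟧`. Then `⁅translation by p, g⁆` is translation by `X * p`, so the `n`-th iterated
commutator goes to translation by `X ^ (n + 1)`. If the iterated commutators generated a finitely
generated subgroup, one of them, say the `N`-th, would lie in the subgroup generated by the earlier
ones; but those generate only translations by series whose `X ^ (N + 1)`-coefficient vanishes.
-/

open Set PowerSeries

section IteratedCommutator

variable {G H : Type*} [Group G] [Group H]

theorem itComm_zero (x g : G) : itComm x g 0 = ⁅x, g⁆ := rfl

theorem itComm_succ (x g : G) (n : ℕ) : itComm x g (n + 1) = ⁅itComm x g n, g⁆ :=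
  Function.iterate_succ_apply' _ _ _

theorem map_itComm (f : G →* H) (x g : G) (n : ℕ) :
    f (itComm x g n) = itComm (f x) (f g) n := by
  induction n with
  | zero => exact map_commutatorElement f x g
  | succ n ih => rw [itComm_succ, itComm_succ, map_commutatorElement, ih]

end IteratedCommutator

namespace Subgroup

variable {G H K : Type*} [Group G] [Group H] [Group K]

theorem exists_mem_closure_image_Iio_of_fg {f : ℕ → G} (hf : (closure (range f)).FG) :
    ∃ N, f N ∈ closure (f '' Iio N) := by
  have hmono : Monotone fun N => closure (f '' Iio N) := fun M N hMN =>
    closure_mono (image_mono (Iio_subset_Iio hMN))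
  have hbounded : ∀ y ∈ closure (range f), ∃ N, y ∈ closure (f '' Iio N) := by
    intro y hy
    induction hy using closure_induction with
    | mem _ hy =>
      obtain ⟨n, rfl⟩ := hy
      exact ⟨n + 1, subset_closure (mem_image_of_mem f (Nat.lt_succ_self n))⟩
    | one => exact ⟨0, one_mem _⟩
    | mul _ _ _ _ hy hz =>
      obtain ⟨M, hM⟩ := hy
      obtain ⟨N, hN⟩ := hz
      exact ⟨max M N, mul_mem (hmono (le_max_left M N) hM) (hmono (le_max_right M N) hN)⟩
    | inv _ _ hy =>
      obtain ⟨N, hN⟩ := hy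
      exact ⟨N, inv_mem hN⟩
  obtain ⟨S, hS⟩ := hf
  choose! bound hbound using fun s (hs : s ∈ S) => hbounded s (hS ▸ subset_closure hs)
  refine ⟨S.sup bound, ?_⟩
  have hle : closure (range f) ≤ closure (f '' Iio (S.sup bound)) :=
    hS ▸ (closure_le _).2 fun s hs => hmono (Finset.le_sup hs) (hbound s hs)
  exact hle (subset_closure (mem_range_self _))

theorem mem_closure_image_of_map_eq {Φ : G →* K} {ι : H →* K} (hι : Function.Injective ι)
    {c : ℕ → G} {a : ℕ → H} (h : ∀ n, Φ (c n) = ι (a n)) {s : Set ℕ} {m : ℕ}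
    (hm : c m ∈ closure (c '' s)) : a m ∈ closure (a '' s) := by
  have hmap : (closure (c '' s)).map Φ = (closure (a '' s)).map ι := by
    simp only [MonoidHom.map_closure, image_image, h]
  rw [← mem_map_iff_mem hι, ← h, ← hmap]
  exact mem_map_of_mem Φ hm

end Subgroup

namespace AffineEquiv

variable {R V : Type*} [CommRing R] [AddCommGroup V] [Module R V]

theorem constVAddHom_injective : Function.Injective (constVAddHom R V) := fun v w h => by
  simpa using congr($h 0)

theorem commutatorElement_constVAdd_homothetyUnitsMulHom (v : V) (u : Rˣ) :
    ⁅constVAdd R V v, homothetyUnitsMulHom (0 : V) u⁆ = constVAdd R V ((1 - (u : R)) • v) := by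
  have hinv : (constVAdd R V v)⁻¹ = constVAdd R V (-v) := constVAdd_symm R V v
  ext y
  simp only [commutatorElement_def, hinv, ← map_inv, coe_mul, coe_homothetyUnitsMulHom_apply,
    Function.comp_apply, AffineMap.homothety_apply, vsub_eq_sub, sub_zero, vadd_eq_add, add_zero,
    constVAdd_apply, smul_add, smul_neg, smul_smul, Units.mul_inv, one_smul, sub_smul]
  abel

theorem itComm_constVAdd_homothetyUnitsMulHom (v : V) (u : Rˣ) (n : ℕ) :
    itComm (constVAdd R V v) (homothetyUnitsMulHom (0 : V) u) n =
      constVAdd R V ((1 - (u : R)) ^ (n + 1) • v) := by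
  induction n with
  | zero => rw [itComm_zero, commutatorElement_constVAdd_homothetyUnitsMulHom, zero_add, pow_one]
  | succ n ih =>
    rw [itComm_succ, ih, commutatorElement_constVAdd_homothetyUnitsMulHom, smul_smul, ← pow_succ']

end AffineEquiv

namespace PowerSeries

variable {R : Type*} [CommRing R] [Nontrivial R]

theorem ofAdd_X_pow_succ_notMem_closure (N : ℕ) :
    Multiplicative.ofAdd (X ^ (N + 1) : R⟦X⟧) ∉
      Subgroup.closure ((fun n => Multiplicative.ofAdd (X ^ (n + 1) : R⟦X⟧)) '' Iio N) := by
  let χ : Multiplicative R⟦X⟧ →* Multiplicative R :=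
    (coeff (N + 1)).toAddMonoidHom.toMultiplicative
  have hle : Subgroup.closure ((fun n => Multiplicative.ofAdd (X ^ (n + 1) : R⟦X⟧)) '' Iio N) ≤
      χ.ker := by
    rw [Subgroup.closure_le]
    rintro _ ⟨n, hn, rfl⟩
    simpa [χ, coeff_X_pow] using hn.ne'
  intro h
  simpa [χ, coeff_X_pow] using hle h

end PowerSeries

/-- A nonabelian free group is not algebraic. -/
theorem free_group_not_algebraic :
    ∃ g x : FreeGroup Bool,
      ¬ (Subgroup.closure (Set.range (itComm x g))).FG := by
  let u : ℤ⟦X⟧ˣ := (isUnit_iff_constantCoeff (φ := 1 - X)).2 (by simp) |>.unit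
  have hu : 1 - (u : ℤ⟦X⟧) = X := by simp [u]
  let Φ : FreeGroup Bool →* ℤ⟦X⟧ ≃ᵃ[ℤ⟦X⟧] ℤ⟦X⟧ := FreeGroup.lift fun b =>
    if b then AffineEquiv.homothetyUnitsMulHom 0 u else AffineEquiv.constVAdd _ _ 1
  have hΦ (n : ℕ) : Φ (itComm (.of false) (.of true) n) =
      AffineEquiv.constVAddHom ℤ⟦X⟧ ℤ⟦X⟧ (.ofAdd (X ^ (n + 1))) := by
    simp [Φ, map_itComm, AffineEquiv.itComm_constVAdd_homothetyUnitsMulHom, hu]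
  refine ⟨.of true, .of false, fun hfg => ?_⟩
  obtain ⟨N, hN⟩ := Subgroup.exists_mem_closure_image_Iio_of_fg hfg
  exact ofAdd_X_pow_succ_notMem_closure N
    (Subgroup.mem_closure_image_of_map_eq AffineEquiv.constVAddHom_injective hΦ hN)
end

section
/- Let A be a unital associative K-algebra, G ≤ A*, and N a nil two-sided ideal of A (every element of N is nilpotent). Then every element of the subgroup H = G ∩ (1 + N) is a unipotent element of any representation of A: for each h ∈ H there is n with (h − 1)^n = 0 in A. Moreover, if N^m = 0 then H is nilpotent as a group of class less than m. -/
/-!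
Units congruent to `1` modulo a left ideal `I` form a subgroup `U(I)` of `Aˣ`. For two-sided `I`
the identity `⁅u, v⁆ - 1 = ((u - 1) * (v - 1) - (v - 1) * (u - 1)) * u⁻¹ * v⁻¹` shows
`⁅U(I ^ i), U(I ^ j)⁆ ≤ U(I ^ (i + j))`. So the `k`-th term of the lower central series of a group
of units inside `1 + N` lies in `1 + N ^ (k + 1)`, which is trivial for `k = m - 1` once
`N ^ m = 0`. Unipotence of the elements of `1 + N` is just the nilness of `N`.
-/

open scoped commutatorElement

namespace Ideal

variable {A : Type*} [Ring A]

theorem pow_eq_bot_of_forall_list_prod_eq_zero {I : Ideal A} {m : ℕ}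
    (hm : ∀ l : List A, l.length = m → (∀ x ∈ l, x ∈ I) → l.prod = 0) : I ^ m = ⊥ := by
  suffices h : ∀ k (l : List A), k + l.length = m → (∀ x ∈ l, x ∈ I) →
      ∀ x ∈ I ^ k, x * l.prod = 0 by
    refine (Submodule.eq_bot_iff _).2 fun x hx => ?_
    simpa using h m [] rfl (by simp) x hx
  intro k
  induction k with
  | zero => intro l hl hlI x _; rw [hm l (by omega) hlI, mul_zero]
  | succ k ih =>
    intro l hl hlI x hx
    rw [Submodule.pow_succ] at hx
    refine Submodule.mul_induction_on hx (fun a ha b hb => ?_) fun y z hy hz => ?_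
    · rw [mul_assoc, ← List.prod_cons]
      exact ih (b :: l) (by simp only [List.length_cons]; omega)
        (by simpa only [List.forall_mem_cons] using ⟨hb, hlI⟩) a ha
    · rw [add_mul, hy, hz, add_zero]

def unitsOneAdd (I : Ideal A) : Subgroup Aˣ where
  carrier := {u | (u : A) - 1 ∈ I}
  one_mem' := by simp
  mul_mem' {u v} hu hv := by
    have h : ((u * v : Aˣ) : A) - 1 = u * (v - 1) + (u - 1) := by
      simp only [Units.val_mul]; noncomm_ring
    rw [Set.mem_ofPred_eq, h]
    exact I.add_mem (I.mul_mem_left _ hv) hu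
  inv_mem' {u} hu := by
    have h : ((u⁻¹ : Aˣ) : A) - 1 = -(u⁻¹ : Aˣ) * (u - 1) := by
      rw [neg_mul, mul_sub, Units.inv_mul, mul_one, neg_sub]
    rw [Set.mem_ofPred_eq, h]
    exact I.mul_mem_left _ hu

variable {I : Ideal A}

theorem mem_unitsOneAdd {u : Aˣ} : u ∈ I.unitsOneAdd ↔ (u : A) - 1 ∈ I := Iff.rfl

theorem unitsOneAdd_mono {J : Ideal A} (h : I ≤ J) : I.unitsOneAdd ≤ J.unitsOneAdd :=
  fun _ hu => h hu

@[simp]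
theorem unitsOneAdd_bot : (⊥ : Ideal A).unitsOneAdd = ⊥ :=
  (Subgroup.eq_bot_iff_forall _).2 fun _ hu =>
    Units.ext (sub_eq_zero.1 ((Submodule.mem_bot A).1 hu))

variable [I.IsTwoSided]

theorem commutator_unitsOneAdd_pow_le (i j : ℕ) :
    ⁅(I ^ i).unitsOneAdd, (I ^ j).unitsOneAdd⁆ ≤ (I ^ (i + j)).unitsOneAdd := by
  rw [Subgroup.commutator_le]
  intro u hu v hv
  rw [mem_unitsOneAdd] at hu hv ⊢
  have key : ((⁅u, v⁆ : Aˣ) : A) - 1 =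
      ((u - 1) * (v - 1) - (v - 1) * (u - 1)) * ((u⁻¹ * v⁻¹ : Aˣ) : A) := by
    rw [show ((u : A) - 1) * (v - 1) - (v - 1) * (u - 1) = u * v - v * u by noncomm_ring,
      sub_mul]
    simp only [commutatorElement_def, Units.val_mul, mul_assoc, Units.mul_inv_cancel_left,
      Units.mul_inv]
  rw [key]
  refine (I ^ (i + j)).mul_mem_right _ (sub_mem ?_ ?_)
  · exact IsTwoSided.pow_add (I := I) i j ▸ mul_mem_mul hu hv
  · exact add_comm j i ▸ IsTwoSided.pow_add (I := I) j i ▸ mul_mem_mul hv hu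

theorem lowerCentralSeries_le_unitsOneAdd_pow {S : Subgroup Aˣ} (hS : S ≤ I.unitsOneAdd)
    (k : ℕ) : S.lowerCentralSeries k ≤ (I ^ (k + 1)).unitsOneAdd := by
  induction k with
  | zero => simpa only [Subgroup.lowerCentralSeries_zero, zero_add, Submodule.pow_one] using hS
  | succ k ih =>
    rw [Subgroup.lowerCentralSeries_succ]
    exact (Subgroup.commutator_mono ih (by simpa only [Submodule.pow_one] using hS)).trans
      (commutator_unitsOneAdd_pow_le (k + 1) 1)

theorem lowerCentralSeries_eq_bot_of_pow_eq_bot {S : Subgroup Aˣ} (hS : S ≤ I.unitsOneAdd)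
    {m : ℕ} (hm : I ^ m = ⊥) : S.lowerCentralSeries (m - 1) = ⊥ := by
  refine eq_bot_iff.2 ((lowerCentralSeries_le_unitsOneAdd_pow hS (m - 1)).trans ?_)
  rw [← unitsOneAdd_bot, ← hm]
  exact unitsOneAdd_mono (pow_le_pow_right (by omega))

end Ideal

theorem one_plus_nil_ideal_subgroup_unipotent_and_nilpotent_general
    {A : Type*} [Ring A]
    (G : Subgroup Aˣ) (N : TwoSidedIdeal A)
    (hnil : ∀ x ∈ N, IsNilpotent x) :
    (∀ h : G, ((h : Aˣ) : A) - 1 ∈ N → ∃ n : ℕ, (((h : Aˣ) : A) - 1) ^ n = 0) ∧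
    (∀ m : ℕ, (∀ l : List A, l.length = m → (∀ x ∈ l, x ∈ N) → l.prod = 0) →
      ∀ H : Subgroup G, ((H : Set G) = {g : G | ((g : Aˣ) : A) - 1 ∈ N}) →
        lowerCentralSeries H (m - 1) = ⊥) := by
  refine ⟨fun h hh => hnil _ hh, fun m hm H hH => ?_⟩
  have hNm : N.asIdeal ^ m = ⊥ :=
    Ideal.pow_eq_bot_of_forall_list_prod_eq_zero fun l hl hlN =>
      hm l hl (by simpa only [TwoSidedIdeal.mem_asIdeal] using hlN)
  have hH_le : H.map G.subtype ≤ N.asIdeal.unitsOneAdd := by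
    rw [Subgroup.map_le_iff_le_comap]
    intro g hg
    rw [← SetLike.mem_coe, hH] at hg
    exact TwoSidedIdeal.mem_asIdeal.2 hg
  change H.lowerCentralSeries (m - 1) = ⊥
  rw [← Subgroup.map_eq_bot_iff_of_injective _ G.subtype_injective,
    Subgroup.map_lowerCentralSeries]
  exact Ideal.lowerCentralSeries_eq_bot_of_pow_eq_bot hH_le hNm

theorem one_plus_nil_ideal_subgroup_unipotent_and_nilpotent
    {K A : Type*} [Field K] [Ring A] [Algebra K A]
    (G : Subgroup Aˣ) (N : TwoSidedIdeal A)
    (hnil : ∀ x ∈ N, IsNilpotent x) :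
    (∀ h : G, ((h : Aˣ) : A) - 1 ∈ N → ∃ n : ℕ, (((h : Aˣ) : A) - 1) ^ n = 0) ∧
    (∀ m : ℕ, (∀ l : List A, l.length = m → (∀ x ∈ l, x ∈ N) → l.prod = 0) →
      ∀ H : Subgroup G, ((H : Set G) = {g : G | ((g : Aˣ) : A) - 1 ∈ N}) →
        lowerCentralSeries H (m - 1) = ⊥) :=
  one_plus_nil_ideal_subgroup_unipotent_and_nilpotent_general G N hnil
end

section
/- Every Noetherian locally nilpotent group is nilpotent (and hence, being finitely generated nilpotent, is polycyclic). -/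
/-! Applied to the finitely generated subgroup `G` itself, local nilpotence gives nilpotence.
For polycyclicity, refine the upper central series: if `Z_{c+1} = ⟨Z_c, s₁, …, sₖ⟩`, every
subgroup `K` between `Z_c` and `Z_{c+1}` satisfies `⁅K, G⁆ ≤ Z_c ≤ K` and is therefore normal
in `G`, so adjoining the `sᵢ` one at a time gives steps with cyclic factors. -/

namespace Subgroup

variable {G : Type*} [Group G]

theorem isCyclic_sup_closure_singleton_quotient (A : Subgroup G) [A.Normal] (g : G) :
    IsCyclic ((A ⊔ closure {g} : Subgroup G) ⧸ A.subgroupOf (A ⊔ closure {g})) := by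
  rw [sup_comm, ← zpowers_eq_closure]
  have : IsCyclic (zpowers g ⧸ A.subgroupOf (zpowers g)) :=
    isCyclic_of_surjective _ (QuotientGroup.mk'_surjective _)
  exact (QuotientGroup.quotientInfEquivProdNormalQuotient _ A).isCyclic.mp this

theorem normal_of_le_of_commutator_le {A B K : Subgroup G} (hAK : A ≤ K) (hKB : K ≤ B)
    (hBA : ⁅B, ⊤⁆ ≤ A) : K.Normal :=
  commutator_top_right_le_iff.mp ((commutator_mono hKB le_rfl).trans (hBA.trans hAK))

inductive HasCyclicNormalSeries : Subgroup G → Prop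
  | bot : HasCyclicNormalSeries ⊥
  | sup_closure_singleton {A : Subgroup G} (g : G) :
      HasCyclicNormalSeries A → A.Normal → HasCyclicNormalSeries (A ⊔ closure {g})

namespace HasCyclicNormalSeries

theorem exists_series {H : Subgroup G} (hH : HasCyclicNormalSeries H) :
    ∃ (n : ℕ) (f : Fin (n + 1) → Subgroup G),
      f 0 = ⊥ ∧ f (Fin.last n) = H ∧
      ∀ i : Fin n, f i.castSucc ≤ f i.succ ∧
        ∃ _ : ((f i.castSucc).subgroupOf (f i.succ)).Normal,
          IsCyclic ((f i.succ) ⧸ (f i.castSucc).subgroupOf (f i.succ)) := by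
  induction hH with
  | bot => exact ⟨0, fun _ => ⊥, rfl, rfl, fun i => i.elim0⟩
  | @sup_closure_singleton A g _ hA ih =>
    obtain ⟨n, f, hf0, hfn, hf⟩ := ih
    refine ⟨n + 1, Fin.snoc f (A ⊔ closure {g}), by simpa using hf0, by simp, fun i => ?_⟩
    induction i using Fin.lastCases with
    | last =>
      rw [Fin.succ_last, Fin.snoc_last, Fin.snoc_castSucc, hfn]
      exact ⟨le_sup_left, inferInstance, isCyclic_sup_closure_singleton_quotient A g⟩
    | cast j =>
      rw [Fin.succ_castSucc, Fin.snoc_castSucc, Fin.snoc_castSucc]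
      exact hf j

theorem sup_closure {A B : Subgroup G} (hA : HasCyclicNormalSeries A) (hAB : A ≤ B)
    (hBA : ⁅B, ⊤⁆ ≤ A) (s : Finset G) (hs : (s : Set G) ⊆ B) :
    HasCyclicNormalSeries (A ⊔ closure s) := by
  classical
  induction s using Finset.induction_on with
  | empty => simpa using hA
  | insert a s _ ih =>
    rw [Finset.coe_insert] at hs ⊢
    rw [← Set.union_singleton, closure_union, ← sup_assoc]
    have hsB : (s : Set G) ⊆ B := (Set.subset_insert a _).trans hs
    exact .sup_closure_singleton a (ih hsB)
      (normal_of_le_of_commutator_le le_sup_left (sup_le hAB ((closure_le B).mpr hsB)) hBA)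

theorem of_fg {A B : Subgroup G} (hA : HasCyclicNormalSeries A) (hAB : A ≤ B)
    (hBA : ⁅B, ⊤⁆ ≤ A) (hB : B.FG) : HasCyclicNormalSeries B := by
  obtain ⟨s, rfl⟩ := hB
  simpa [hAB] using hA.sup_closure hAB hBA s subset_closure

end HasCyclicNormalSeries

theorem hasCyclicNormalSeries_upperCentralSeries (hfg : ∀ H : Subgroup G, H.FG) (n : ℕ) :
    HasCyclicNormalSeries (upperCentralSeries G n) := by
  induction n with
  | zero => simpa using HasCyclicNormalSeries.bot
  | succ n ih =>
    exact ih.of_fg (upperCentralSeries_mono G n.le_succ)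
      (commutator_upperCentralSeries_top_le G n) (hfg _)

end Subgroup

open Subgroup

theorem isPolycyclic_of_isNilpotent {G : Type*} [Group G] [Group.IsNilpotent G]
    (hfg : ∀ H : Subgroup G, H.FG) : IsPolycyclic G := by
  obtain ⟨n, hn⟩ := Group.IsNilpotent.nilpotent' (G := G)
  rw [IsPolycyclic, ← hn]
  exact (hasCyclicNormalSeries_upperCentralSeries hfg n).exists_series

/-- A Noetherian locally nilpotent group is nilpotent, hence polycyclic. -/
theorem noetherian_locally_nilpotent_is_nilpotent
    {G : Type*} [Group G] (hnoeth : ∀ H : Subgroup G, H.FG)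
    (hlocnilp : ∀ H : Subgroup G, H.FG → Group.IsNilpotent H) :
    Group.IsNilpotent G ∧ IsPolycyclic G := by
  have : Group.IsNilpotent (⊤ : Subgroup G) := hlocnilp ⊤ (hnoeth ⊤)
  have hnil : Group.IsNilpotent G := Group.nilpotent_of_mulEquiv Subgroup.topEquiv
  exact ⟨hnil, isPolycyclic_of_isNilpotent hnoeth⟩
end

section
/- Let (V,G) be a representation of a group G and suppose H_1 and H_2 are normal subgroups of G such that the restricted representations (V,H_1) and (V,H_2) both satisfy a unitriangularity identity x∘(y_1−1)⋯(y_{n_i}−1)≡0 (with elements from H_i). Then (V, H_1H_2) satisfies the identity x∘(y_1−1)⋯(y_{n_1+n_2−1}−1)≡0; i.e., the product of two normal unitriangular subgroups is unitriangular. -/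
open Pointwise

section Aux

variable {K V G : Type*} [Field K] [AddCommGroup V] [Module K V] [Group G]
  (ρ : Representation K G V)

/-- The submodule of vectors killed by every product of `i` operators `ρ g - 1`, `g ∈ H`. -/
def UnitriKilled (H : Subgroup G) (i : ℕ) : Submodule K V where
  carrier := {v | ∀ l : List G, l.length = i → (∀ g ∈ l, g ∈ H) →
      ((l.map (fun g => (ρ g - 1 : Module.End K V))).prod) v = 0}
  add_mem' := by
    intro a b ha hb l hl hm
    rw [map_add, ha l hl hm, hb l hl hm, add_zero]
  zero_mem' := by
    intro l hl hm
    exact map_zero _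
  smul_mem' := by
    intro c x hx l hl hm
    rw [map_smul, hx l hl hm, smul_zero]

lemma mem_UnitriKilled {H : Subgroup G} {i : ℕ} {v : V} :
    v ∈ UnitriKilled ρ H i ↔ ∀ l : List G, l.length = i → (∀ g ∈ l, g ∈ H) →
      ((l.map (fun g => (ρ g - 1 : Module.End K V))).prod) v = 0 := Iff.rfl

lemma UnitriKilled_zero {H : Subgroup G} {v : V} (hv : v ∈ UnitriKilled ρ H 0) : v = 0 := by
  simpa using hv [] rfl (by simp)

lemma UnitriKilled_step {H : Subgroup G} {i : ℕ} {g : G} (hg : g ∈ H) {v : V}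
    (hv : v ∈ UnitriKilled ρ H (i + 1)) :
    (ρ g - 1 : Module.End K V) v ∈ UnitriKilled ρ H i := by
  intro l hl hm
  have := hv (l ++ [g]) (by simp [hl]) (by
    intro x hx
    rcases List.mem_append.mp hx with h | h
    · exact hm x h
    · simpa using List.mem_singleton.mp h ▸ hg)
  simpa [List.map_append, List.prod_append, Module.End.mul_apply] using this

lemma conj_prod (g : G) : ∀ l : List G,
    ((l.map (fun h => (ρ h - 1 : Module.End K V))).prod) * (ρ g : Module.End K V)
      = (ρ g : Module.End K V) *
        (((l.map (fun h => g⁻¹ * h * g)).map (fun h => (ρ h - 1 : Module.End K V))).prod)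
  | [] => by simp
  | h :: t => by
      have key : (ρ h - 1 : Module.End K V) * (ρ g : Module.End K V)
          = (ρ g : Module.End K V) * (ρ (g⁻¹ * h * g) - 1) := by
        have h1 : (ρ g : Module.End K V) * ρ (g⁻¹ * h * g) = ρ h * ρ g := by
          rw [← map_mul, ← map_mul]
          congr 1
          group
        rw [sub_mul, mul_sub, h1, mul_one, one_mul]
      rw [List.map_cons, List.prod_cons, List.map_cons, List.map_cons, List.prod_cons,
        mul_assoc, conj_prod g t, ← mul_assoc, ← mul_assoc, key, mul_assoc]

lemma UnitriKilled_smul {H : Subgroup G} (hH : H.Normal) {i : ℕ} (g : G) {v : V}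
    (hv : v ∈ UnitriKilled ρ H i) : (ρ g : Module.End K V) v ∈ UnitriKilled ρ H i := by
  intro l hl hm
  have key := conj_prod ρ g l
  have : ((l.map (fun h => (ρ h - 1 : Module.End K V))).prod) ((ρ g : Module.End K V) v)
      = (ρ g : Module.End K V)
        ((((l.map (fun h => g⁻¹ * h * g)).map (fun h => (ρ h - 1 : Module.End K V))).prod) v) := by
    rw [← Module.End.mul_apply, key, Module.End.mul_apply]
  rw [this, hv _ (by simp [hl]) (by
    intro x hx
    rcases List.mem_map.mp hx with ⟨y, hy, rfl⟩
    simpa using hH.conj_mem y (hm y hy) g⁻¹), map_zero]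

lemma UnitriKilled_sub {H : Subgroup G} (hH : H.Normal) {i : ℕ} (g : G) {v : V}
    (hv : v ∈ UnitriKilled ρ H i) : (ρ g - 1 : Module.End K V) v ∈ UnitriKilled ρ H i := by
  have : (ρ g - 1 : Module.End K V) v = (ρ g : Module.End K V) v - v := by
    simp [LinearMap.sub_apply]
  rw [this]
  exact Submodule.sub_mem _ (UnitriKilled_smul ρ hH g hv) hv

end Aux

theorem product_of_normal_unitriangular_subgroups
    {K V G : Type*} [Field K] [AddCommGroup V] [Module K V] [Group G]
    (ρ : Representation K G V)
    (H₁ H₂ : Subgroup G) (hn₁ : H₁.Normal) (hn₂ : H₂.Normal)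
    (n₁ n₂ : ℕ)
    (h₁ : ∀ l : List G, l.length = n₁ → (∀ g ∈ l, g ∈ H₁) →
      ∀ v : V, ((l.map (fun g => (ρ g - 1 : Module.End K V))).prod) v = 0)
    (h₂ : ∀ l : List G, l.length = n₂ → (∀ g ∈ l, g ∈ H₂) →
      ∀ v : V, ((l.map (fun g => (ρ g - 1 : Module.End K V))).prod) v = 0) :
    ∀ l : List G, l.length = n₁ + n₂ - 1 → (∀ g ∈ l, g ∈ H₁ ⊔ H₂) →
      ∀ v : V, ((l.map (fun g => (ρ g - 1 : Module.End K V))).prod) v = 0 := by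
  have main : ∀ l : List G, (∀ g ∈ l, g ∈ H₁ ⊔ H₂) → ∀ i j : ℕ, i + j ≤ l.length + 1 →
      ∀ v : V, v ∈ UnitriKilled ρ H₁ i → v ∈ UnitriKilled ρ H₂ j →
      ((l.map (fun g => (ρ g - 1 : Module.End K V))).prod) v = 0 := by
    intro l
    induction l using List.reverseRecOn with
    | nil =>
      intro _ i j hij v hv₁ hv₂
      simp only [List.length_nil, Nat.le_add_left] at hij
      have : i = 0 ∨ j = 0 := by omega
      rcases this with rfl | rfl
      · simpa using UnitriKilled_zero ρ hv₁
      · simpa using UnitriKilled_zero ρ hv₂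
    | append_singleton l g ih =>
      intro hmem i j hij v hv₁ hv₂
      have hg : g ∈ H₁ ⊔ H₂ := hmem g (by simp)
      have hmem' : ∀ x ∈ l, x ∈ H₁ ⊔ H₂ := fun x hx => hmem x (by simp [hx])
      -- decompose g = a * b, a ∈ H₁, b ∈ H₂
      have : g ∈ (H₁ : Set G) * (H₂ : Set G) := by
        rw [show (H₁ : Set G) * (H₂ : Set G) = _ from rfl]
        rw [← Subgroup.mul_normal H₁ H₂]
        exact hg
      obtain ⟨a, ha, b, hb, rfl⟩ := this
      rcases i with _ | i
      · have : v = 0 := UnitriKilled_zero ρ hv₁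
        rw [this, map_zero]
      rcases j with _ | j
      · have : v = 0 := UnitriKilled_zero ρ hv₂
        rw [this, map_zero]
      have hlen : (l ++ [a * b]).length = l.length + 1 := by simp
      rw [hlen] at hij
      -- rewrite the product
      have split : ((l ++ [a * b]).map (fun g => (ρ g - 1 : Module.End K V))).prod v
          = ((l.map (fun g => (ρ g - 1 : Module.End K V))).prod)
              ((ρ (a * b) - 1 : Module.End K V) v) := by
        simp [List.map_append, List.prod_append, Module.End.mul_apply]
      rw [split]
      set A : Module.End K V := ρ a - 1 with hA
      set B : Module.End K V := ρ b - 1 with hB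
      have key : (ρ (a * b) - 1 : Module.End K V) = A * B + A + B := by
        rw [hA, hB, map_mul]
        noncomm_ring
      have hBv₂ : B v ∈ UnitriKilled ρ H₂ j := UnitriKilled_step ρ hb hv₂
      have hBv₁ : B v ∈ UnitriKilled ρ H₁ (i + 1) := UnitriKilled_sub ρ hn₁ b hv₁
      have hABv₁ : A (B v) ∈ UnitriKilled ρ H₁ i := UnitriKilled_step ρ ha hBv₁
      have hABv₂ : A (B v) ∈ UnitriKilled ρ H₂ j := UnitriKilled_sub ρ hn₂ a hBv₂
      have hAv₁ : A v ∈ UnitriKilled ρ H₁ i := UnitriKilled_step ρ ha hv₁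
      have hAv₂ : A v ∈ UnitriKilled ρ H₂ (j + 1) := UnitriKilled_sub ρ hn₂ a hv₂
      have e : (ρ (a * b) - 1 : Module.End K V) v = A (B v) + A v + B v := by
        rw [key]; simp [Module.End.mul_apply]
      rw [e, map_add, map_add]
      rw [ih hmem' i j (by omega) _ hABv₁ hABv₂,
        ih hmem' i (j + 1) (by omega) _ hAv₁ hAv₂,
        ih hmem' (i + 1) j (by omega) _ hBv₁ hBv₂]
      simp
  intro l hl hm v
  exact main l hm n₁ n₂ (by omega)
    v (fun l' hl' hm' => h₁ l' hl' hm' v) (fun l' hl' hm' => h₂ l' hl' hm' v)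
end
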